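/- arXiv:2306.04974 — 4 statements merged into one kernel-verified Lean document; each statement's English description precedes it below -/
import Mathlib

section
/- Let C ≥ 1 be an integer, λ > 0 a real number, and p a probability vector on Fin C. Then for every positive probability vector s on Fin C, H(p, s) + λ * H(U, s) ≥ H(p, p_λ) + λ * H(U, p_λ), with equality if and only if s = p_λ. In other words, the smoothed vector p_λ is the unique minimizer over positive probability vectors of the combined cross-entropy and confidence objective s ↦ H(p, s) + λ * H(U, s). -/
/-- `p` is a probability vector on `Fin C`. -/
def IsProbVec {C : ℕ} (p : Fin C → ℝ) : Prop :=
  (∀ i, 0 ≤ p i) ∧ ∑ i, p i = 1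

/-- `p` is a positive probability vector on `Fin C`. -/
def IsPosProbVec {C : ℕ} (p : Fin C → ℝ) : Prop :=
  (∀ i, 0 < p i) ∧ ∑ i, p i = 1

/-- The uniform probability vector on `Fin C`. -/
noncomputable def unif (C : ℕ) : Fin C → ℝ := fun _ => 1 / (C : ℝ)

/-- The smoothed vector `p_λ`, `p_λ i = (p i + λ/C)/(1 + λ)`. -/
noncomputable def smooth {C : ℕ} (lam : ℝ) (p : Fin C → ℝ) : Fin C → ℝ :=
  fun i => (p i + lam / (C : ℝ)) / (1 + lam)

/-- Cross-entropy `H(a, b) = −∑ i, a i * log (b i)`. -/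
noncomputable def crossEnt {C : ℕ} (a b : Fin C → ℝ) : ℝ :=
  -∑ i, a i * Real.log (b i)

/-- Gibbs' inequality with equality condition. -/
lemma gibbs_aux {C : ℕ} (q s : Fin C → ℝ) (hq : IsPosProbVec q) (hs : IsPosProbVec s) :
    ∑ i, q i * Real.log (s i) ≤ ∑ i, q i * Real.log (q i) ∧
    ((∑ i, q i * Real.log (s i)) = (∑ i, q i * Real.log (q i)) ↔ s = q) := by
  obtain ⟨hqpos, hqsum⟩ := hq
  obtain ⟨hspos, hssum⟩ := hs
  have hterm : ∀ i, q i * Real.log (s i) - q i * Real.log (q i) ≤ s i - q i := by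
    intro i
    have h1 : q i * Real.log (s i) - q i * Real.log (q i)
        = q i * Real.log (s i / q i) := by
      rw [Real.log_div (ne_of_gt (hspos i)) (ne_of_gt (hqpos i))]; ring
    have h2 : Real.log (s i / q i) ≤ s i / q i - 1 :=
      Real.log_le_sub_one_of_pos (div_pos (hspos i) (hqpos i))
    have h3 : q i * Real.log (s i / q i) ≤ q i * (s i / q i - 1) :=
      mul_le_mul_of_nonneg_left h2 (le_of_lt (hqpos i))
    have h4 : q i * (s i / q i - 1) = s i - q i := by
      field_simp [(hqpos i).ne']
    linarith [h1 ▸ h3, h4]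
  have hle : ∑ i, q i * Real.log (s i) ≤ ∑ i, q i * Real.log (q i) := by
    have h := Finset.sum_le_sum (s := Finset.univ) (fun i _ => hterm i)
    rw [Finset.sum_sub_distrib, Finset.sum_sub_distrib, hssum, hqsum] at h
    linarith
  refine ⟨hle, ?_, ?_⟩
  · intro heq
    by_contra hne
    obtain ⟨j, hj⟩ := Function.ne_iff.mp hne
    have hstrict : q j * Real.log (s j) - q j * Real.log (q j) < s j - q j := by
      have h1 : q j * Real.log (s j) - q j * Real.log (q j)
          = q j * Real.log (s j / q j) := by
        rw [Real.log_div (ne_of_gt (hspos j)) (ne_of_gt (hqpos j))]; ring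
      have hne1 : s j / q j ≠ 1 := by
        intro h
        exact hj ((div_eq_one_iff_eq (ne_of_gt (hqpos j))).mp h)
      have h2 : Real.log (s j / q j) < s j / q j - 1 :=
        Real.log_lt_sub_one_of_pos (div_pos (hspos j) (hqpos j)) hne1
      have h3 : q j * Real.log (s j / q j) < q j * (s j / q j - 1) :=
        (mul_lt_mul_iff_right₀ (hqpos j)).mpr h2
      have h4 : q j * (s j / q j - 1) = s j - q j := by field_simp [(hqpos j).ne']
      linarith [h1 ▸ h3]
    have hlt : ∑ i, (q i * Real.log (s i) - q i * Real.log (q i)) < ∑ i, (s i - q i) := by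
      apply Finset.sum_lt_sum (fun i _ => hterm i) ⟨j, Finset.mem_univ j, hstrict⟩
    rw [Finset.sum_sub_distrib, Finset.sum_sub_distrib, hssum, hqsum, heq] at hlt
    linarith
  · rintro rfl; rfl

/-- The smoothed vector `p_λ` is the unique minimizer, over positive probability
vectors `s`, of the combined objective `H(p, s) + λ * H(U, s)`. -/
theorem smooth_unique_minimizer_of_combined_objective
    (C : ℕ) (hC : 1 ≤ C) (lam : ℝ) (hlam : 0 < lam)
    (p : Fin C → ℝ) (hp : IsProbVec p) :
    ∀ s : Fin C → ℝ, IsPosProbVec s →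
      (crossEnt p s + lam * crossEnt (unif C) s ≥
        crossEnt p (smooth lam p) + lam * crossEnt (unif C) (smooth lam p)) ∧
      (crossEnt p s + lam * crossEnt (unif C) s =
          crossEnt p (smooth lam p) + lam * crossEnt (unif C) (smooth lam p) ↔
        s = smooth lam p) := by
  intro s hs
  obtain ⟨hppos, hpsum⟩ := hp
  have hCpos : (0:ℝ) < (C:ℝ) := by exact_mod_cast hC
  have h1lam : (0:ℝ) < 1 + lam := by linarith
  set q := smooth lam p with hq
  have hqpos : ∀ i, 0 < q i := by
    intro i
    apply div_pos _ h1lam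
    have := hppos i
    have : 0 < lam / (C:ℝ) := div_pos hlam hCpos
    linarith [hppos i]
  have hqsum : ∑ i, q i = 1 := by
    simp only [hq, smooth]
    rw [← Finset.sum_div, Finset.sum_add_distrib, hpsum, Finset.sum_const,
      Finset.card_univ, Fintype.card_fin, nsmul_eq_mul]
    field_simp
  have hqvec : IsPosProbVec q := ⟨hqpos, hqsum⟩
  -- key identity: objective(t) = -(1+lam) * ∑ q i * log (t i)
  have key : ∀ t : Fin C → ℝ,
      crossEnt p t + lam * crossEnt (unif C) t = -((1 + lam) * ∑ i, q i * Real.log (t i)) := by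
    intro t
    simp only [crossEnt, unif, hq, smooth, mul_neg]
    rw [← neg_add, neg_inj, Finset.mul_sum, Finset.mul_sum, ← Finset.sum_add_distrib]
    refine Finset.sum_congr rfl fun i _ => ?_
    field_simp
  have hgibbs := gibbs_aux q s hqvec hs
  constructor
  · rw [key s, key q, ge_iff_le, neg_le_neg_iff]
    exact mul_le_mul_of_nonneg_left hgibbs.1 (le_of_lt h1lam)
  · rw [key s, key q, neg_inj, mul_right_inj' (ne_of_gt h1lam)]
    exact hgibbs.2
end

section
/- Let C ≥ 1 be an integer, λ ≥ 0 a real number, and p a probability vector on Fin C with p ≠ U (p is not the uniform vector). Then MSP(p_λ) = MSP(p) if and only if λ = 0. -/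
/-- Maximum softmax probability: the maximum of `p` over `Fin C`. -/
noncomputable def MSP {C : ℕ} (p : Fin C → ℝ) : ℝ := ⨆ i, p i

/-- For `p` not uniform, the smoothed vector has the same maximum softmax
probability as `p` if and only if `λ = 0`. -/
theorem MSP_smooth_eq_iff (C : ℕ) (hC : 1 ≤ C) (lam : ℝ) (hlam : 0 ≤ lam)
    (p : Fin C → ℝ) (hp : IsProbVec p) (hpU : p ≠ unif C) :
    MSP (smooth lam p) = MSP p ↔ lam = 0 := by
  haveI : NeZero C := ⟨by omega⟩
  have hCpos : (0:ℝ) < C := by exact_mod_cast Nat.pos_of_ne_zero (by omega)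
  have hne : (Finset.univ : Finset (Fin C)).Nonempty := Finset.univ_nonempty
  -- MSP as sup'
  have hMSP : ∀ q : Fin C → ℝ, MSP q = Finset.univ.sup' hne q := by
    intro q
    rw [MSP, ← Finset.sup'_univ_eq_ciSup]
  set M := MSP p with hM
  -- MSP of smooth
  have hd : (0:ℝ) < 1 + lam := by linarith
  have hsm : MSP (smooth lam p) = (M + lam / C) / (1 + lam) := by
    rw [hMSP, hM, hMSP p]
    rw [Finset.comp_sup'_eq_sup'_comp hne (fun x => (x + lam / C) / (1 + lam))]
    · rfl
    · intro x y
      rcases le_total x y with h | h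
      · rw [sup_eq_right.2 h, sup_eq_right.2 (by gcongr)]
      · rw [sup_eq_left.2 h, sup_eq_left.2 (by gcongr)]
  -- M > 1/C
  have hjM : ∀ j, p j ≤ M := by
    intro j
    rw [hM, hMSP]
    exact Finset.le_sup' p (Finset.mem_univ j)
  have hMgt : 1 / (C:ℝ) < M := by
    by_contra h
    push_neg at h
    have hall : ∀ j, p j = 1 / (C:ℝ) := by
      intro j
      by_contra hj
      have hjlt : p j < 1 / C := lt_of_le_of_ne (le_trans (hjM j) h) hj
      have hsum : ∑ i, p i < ∑ _i : Fin C, (1 / (C:ℝ)) :=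
        Finset.sum_lt_sum (fun i _ => le_trans (hjM i) h) ⟨j, Finset.mem_univ j, hjlt⟩
      rw [hp.2, Finset.sum_const, Finset.card_univ, Fintype.card_fin, nsmul_eq_mul,
        mul_one_div, div_self hCpos.ne'] at hsum
      exact lt_irrefl _ hsum
    exact hpU (funext fun j => hall j)
  constructor
  · intro h
    rw [hsm, div_eq_iff hd.ne'] at h
    have : lam * (M - 1 / C) = 0 := by ring_nf; ring_nf at h; linarith
    rcases mul_eq_zero.1 this with h' | h'
    · exact h'
    · exfalso; linarith
  · intro h
    subst h
    rw [hsm]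
    simp
end

section
/- Let C ≥ 1 be an integer, λ > 0 a real number, p a probability vector on Fin C, and s a positive probability vector on Fin C. Then (H(p, s) + λ * H(U, s)) − (H(p, p_λ) + λ * H(U, p_λ)) = (1 + λ) * KL(p_λ ‖ s). That is, the excess of the combined cross-entropy and confidence objective at s over its minimum value equals (1 + λ) times the KL divergence of p_λ from s. -/
/-- KL divergence `KL(a ‖ b) = ∑ i, a i * log (a i / b i)`; terms with
`a i = 0` contribute `0` (which holds since `0 * log (0 / b i) = 0`). -/
noncomputable def KLdiv {C : ℕ} (a b : Fin C → ℝ) : ℝ :=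
  ∑ i, a i * Real.log (a i / b i)

section

variable {C : ℕ}

lemma add_mul_unif_eq_mul_smooth (lam : ℝ) (hlam : 1 + lam ≠ 0) (p : Fin C → ℝ) (i : Fin C) :
    p i + lam * unif C i = (1 + lam) * smooth lam p i := by
  simp only [unif, smooth]
  field_simp

lemma crossEnt_add_mul_unif_eq_mul_crossEnt_smooth (lam : ℝ) (hlam : 1 + lam ≠ 0)
    (p q : Fin C → ℝ) :
    crossEnt p q + lam * crossEnt (unif C) q = (1 + lam) * crossEnt (smooth lam p) q := by
  simp only [crossEnt, mul_neg, Finset.mul_sum, ← neg_add, ← Finset.sum_add_distrib]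
  congr 1
  refine Finset.sum_congr rfl fun i _ => ?_
  linear_combination Real.log (q i) * add_mul_unif_eq_mul_smooth lam hlam p i

lemma KLdiv_eq_crossEnt_sub_crossEnt (a : Fin C → ℝ) {b : Fin C → ℝ} (hb : ∀ i, b i ≠ 0) :
    KLdiv a b = crossEnt a b - crossEnt a a := by
  simp only [KLdiv, crossEnt, sub_neg_eq_add, ← Finset.sum_sub_distrib, neg_add_eq_sub]
  refine Finset.sum_congr rfl fun i _ => ?_
  rcases eq_or_ne (a i) 0 with ha | ha
  · simp [ha]
  · rw [Real.log_div ha (hb i)]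
    ring

end

theorem combined_objective_excess_eq_KL_general
    (C : ℕ) (lam : ℝ) (hlam : 0 < lam)
    (p : Fin C → ℝ)
    (s : Fin C → ℝ) (hs : IsPosProbVec s) :
    (crossEnt p s + lam * crossEnt (unif C) s) -
        (crossEnt p (smooth lam p) + lam * crossEnt (unif C) (smooth lam p)) =
      (1 + lam) * KLdiv (smooth lam p) s := by
  have hlam' : 1 + lam ≠ 0 := by positivity
  rw [crossEnt_add_mul_unif_eq_mul_crossEnt_smooth lam hlam',
    crossEnt_add_mul_unif_eq_mul_crossEnt_smooth lam hlam',
    KLdiv_eq_crossEnt_sub_crossEnt _ fun i => (hs.1 i).ne']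
  ring

/-- The excess of the combined cross-entropy objective at `s` over its
minimum value equals `(1 + λ)` times the KL divergence of `p_λ` from `s`. -/
theorem combined_objective_excess_eq_KL
    (C : ℕ) (hC : 1 ≤ C) (lam : ℝ) (hlam : 0 < lam)
    (p : Fin C → ℝ) (hp : IsProbVec p)
    (s : Fin C → ℝ) (hs : IsPosProbVec s) :
    (crossEnt p s + lam * crossEnt (unif C) s) -
        (crossEnt p (smooth lam p) + lam * crossEnt (unif C) (smooth lam p)) =
      (1 + lam) * KLdiv (smooth lam p) s :=
  combined_objective_excess_eq_KL_general C lam hlam p s hs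
end

section
/- Let C ≥ 1 be an integer, λ ≥ 0 and ε ≥ 0 real numbers, y : Fin C, and q a positive probability vector on Fin C. If KL((e_y)_λ ‖ q) ≤ ε, then MSP(q) ≥ 1/(1 + λ) + λ/((1 + λ) * C) − Real.sqrt (ε/2). -/
/-- The one-hot probability vector at `y`. -/
def oneHot {C : ℕ} (y : Fin C) : Fin C → ℝ := fun i => if i = y then 1 else 0

/-
Coarse-graining `Fin C` into `{y}` and its complement can only decrease the KL divergence
(log-sum inequality), so `KL((e_y)_λ ‖ q)` dominates the binary KL divergence between
`a = (e_y)_λ y = 1/(1+λ) + λ/((1+λ)C)` and `q y`. Binary Pinsker bounds the latter below by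
`2 (a - q y)²`, hence `a - q y ≤ √(ε/2)`, and `q y ≤ MSP q`.
-/

open Real Finset Set

lemma sum_mul_log_div_sum_le {ι : Type*} (s : Finset ι) {p q : ι → ℝ}
    (hp : ∀ i ∈ s, 0 ≤ p i) (hq : ∀ i ∈ s, 0 < q i) :
    (∑ i ∈ s, p i) * log ((∑ i ∈ s, p i) / ∑ i ∈ s, q i) ≤ ∑ i ∈ s, p i * log (p i / q i) := by
  rcases s.eq_empty_or_nonempty with rfl | hs
  · simp
  set Q := ∑ i ∈ s, q i
  have hQ : 0 < Q := sum_pos hq hs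
  -- Jensen for `x ↦ x log x` at the points `p i / q i` with weights `q i / Q`
  have jensen := convexOn_mul_log.map_sum_le (t := s) (w := fun i => q i / Q)
    (p := fun i => p i / q i) (fun i hi => (div_pos (hq i hi) hQ).le)
    (by rw [← sum_div, div_self hQ.ne']) (fun i hi => div_nonneg (hp i hi) (hq i hi).le)
  have hmean : ∑ i ∈ s, q i / Q * (p i / q i) = (∑ i ∈ s, p i) / Q := by
    rw [sum_div]
    refine sum_congr rfl fun i hi => ?_
    field_simp [(hq i hi).ne']
  have hweighted : ∑ i ∈ s, q i / Q * (p i / q i * log (p i / q i))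
      = (∑ i ∈ s, p i * log (p i / q i)) / Q := by
    rw [sum_div]
    refine sum_congr rfl fun i hi => ?_
    field_simp [(hq i hi).ne']
  simp only [smul_eq_mul] at jensen
  rw [hmean, hweighted, le_div_iff₀ hQ] at jensen
  calc (∑ i ∈ s, p i) * log ((∑ i ∈ s, p i) / Q)
      = (∑ i ∈ s, p i) / Q * log ((∑ i ∈ s, p i) / Q) * Q := by field_simp
    _ ≤ _ := jensen

noncomputable def binaryKL (a b : ℝ) : ℝ :=
  a * log (a / b) + (1 - a) * log ((1 - a) / (1 - b))

lemma hasDerivAt_binaryKL_right {a x : ℝ} (ha : a ∈ Ioo (0 : ℝ) 1) (hx : x ∈ Ioo (0 : ℝ) 1) :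
    HasDerivAt (binaryKL a) (-(a / x) + (1 - a) / (1 - x)) x := by
  obtain ⟨ha0, ha1⟩ := ha
  obtain ⟨hx0, hx1⟩ := hx
  have h1 : HasDerivAt (fun x => a / x) (-(a / x ^ 2)) x := by
    simpa [div_eq_mul_inv] using (hasDerivAt_inv hx0.ne').const_mul a
  have h2 : HasDerivAt (fun x => (1 - a) / (1 - x)) ((1 - a) / (1 - x) ^ 2) x := by
    simpa [div_eq_mul_inv] using
      (((hasDerivAt_id x).const_sub 1).inv (sub_ne_zero.2 hx1.ne')).const_mul (1 - a)
  refine (((h1.log (by positivity)).const_mul a).add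
    ((h2.log (div_pos (sub_pos.2 ha1) (sub_pos.2 hx1)).ne').const_mul (1 - a))).congr_deriv ?_
  have : 1 - x ≠ 0 := sub_ne_zero.2 hx1.ne'
  have : 1 - a ≠ 0 := sub_ne_zero.2 ha1.ne'
  field_simp

lemma binaryKL_one_sub (a b : ℝ) : binaryKL (1 - a) (1 - b) = binaryKL a b := by
  simp only [binaryKL, sub_sub_cancel]
  ring

lemma two_mul_sq_sub_le_binaryKL_of_mem_Ioo {a b : ℝ} (ha : a ∈ Ioo (0 : ℝ) 1)
    (hb : b ∈ Ioo (0 : ℝ) 1) : 2 * (a - b) ^ 2 ≤ binaryKL a b := by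
  wlog hba : b ≤ a generalizing a b
  · calc 2 * (a - b) ^ 2 = 2 * ((1 - a) - (1 - b)) ^ 2 := by ring
      _ ≤ binaryKL (1 - a) (1 - b) :=
        this ⟨by linarith [ha.2], by linarith [ha.1]⟩ ⟨by linarith [hb.2], by linarith [hb.1]⟩
          (by linarith)
      _ = binaryKL a b := binaryKL_one_sub a b
  have hsub : Icc b a ⊆ Ioo 0 1 := fun x hx => ⟨hb.1.trans_le hx.1, hx.2.trans_lt ha.2⟩
  set g : ℝ → ℝ := fun x => binaryKL a x - 2 * (a - x) ^ 2
  have hg : ∀ x ∈ Ioo (0 : ℝ) 1,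
      HasDerivAt g ((a - x) * (4 - 1 / (x * (1 - x)))) x := by
    intro x hx
    refine ((hasDerivAt_binaryKL_right ha hx).sub
      (((hasDerivAt_id' x).const_sub a).pow 2 |>.const_mul 2)).congr_deriv ?_
    have : 1 - x ≠ 0 := sub_ne_zero.2 hx.2.ne'
    field_simp [hx.1.ne']
    ring
  -- `g` decreases on `[b, a]` since `x (1 - x) ≤ 1 / 4`
  have hanti : AntitoneOn g (Icc b a) := by
    refine antitoneOn_of_hasDerivWithinAt_nonpos (convex_Icc b a)
      (fun x hx => (hg x (hsub hx)).continuousAt.continuousWithinAt)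
      (fun x hx => (hg x (hsub (interior_subset hx))).hasDerivWithinAt) fun x hx => ?_
    rw [interior_Icc] at hx
    have hx1 : 0 < x * (1 - x) := mul_pos (hb.1.trans hx.1) (by linarith [ha.2, hx.2])
    refine mul_nonpos_of_nonneg_of_nonpos (by linarith [hx.2]) ?_
    rw [sub_nonpos, le_div_iff₀ hx1]
    nlinarith [sq_nonneg (2 * x - 1)]
  have hga : g a = 0 := by simp [g, binaryKL, div_self ha.1.ne', div_self (sub_ne_zero.2 ha.2.ne')]
  have := hanti ⟨le_rfl, hba⟩ ⟨hba, le_rfl⟩ hba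
  simp only [g, hga] at this ⊢
  linarith

lemma continuous_mul_log_div {c : ℝ} (hc : c ≠ 0) : Continuous fun x => x * log (x / c) := by
  have : (fun x => x * log (x / c)) = fun x => c * (x / c * log (x / c)) := by
    funext x
    field_simp
  rw [this]
  exact ((continuous_id.div_const c).mul_log).const_mul c

lemma two_mul_sq_sub_le_binaryKL {a b : ℝ} (ha : a ∈ Icc (0 : ℝ) 1) (hb : b ∈ Ioo (0 : ℝ) 1) :
    2 * (a - b) ^ 2 ≤ binaryKL a b := by
  have hcont : Continuous fun a => binaryKL a b :=
    (continuous_mul_log_div hb.1.ne').add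
      ((continuous_mul_log_div (sub_ne_zero.2 hb.2.ne')).comp (continuous_const.sub continuous_id))
  have hclosed : IsClosed {a | 2 * (a - b) ^ 2 ≤ binaryKL a b} := isClosed_le (by fun_prop) hcont
  rw [← closure_Ioo zero_ne_one] at ha
  exact hclosed.closure_subset_iff.2 (fun a ha => two_mul_sq_sub_le_binaryKL_of_mem_Ioo ha hb) ha

lemma binaryKL_le_KLdiv {C : ℕ} {p q : Fin C → ℝ} (hp0 : ∀ i, 0 ≤ p i) (hp1 : ∑ i, p i = 1)
    (hq : IsPosProbVec q) (y : Fin C) : binaryKL (p y) (q y) ≤ KLdiv p q := by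
  have hrest := sum_mul_log_div_sum_le (univ.erase y) (fun i _ => hp0 i) (fun i _ => hq.1 i)
  rw [sum_erase_eq_sub (mem_univ y), sum_erase_eq_sub (mem_univ y), hp1, hq.2] at hrest
  rw [KLdiv, ← add_sum_erase _ _ (mem_univ y), binaryKL]
  exact add_le_add_right hrest _

lemma smooth_nonneg {C : ℕ} {lam : ℝ} (hlam : 0 ≤ lam) {p : Fin C → ℝ} (hp : ∀ i, 0 ≤ p i)
    (i : Fin C) : 0 ≤ smooth lam p i := by
  have := hp i
  unfold smooth
  positivity

lemma sum_smooth {C : ℕ} (hC : C ≠ 0) {lam : ℝ} (hlam : 1 + lam ≠ 0) {p : Fin C → ℝ}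
    (hp : ∑ i, p i = 1) : ∑ i, smooth lam p i = 1 := by
  simp only [smooth, ← sum_div, sum_add_distrib, hp, sum_const, card_univ, Fintype.card_fin,
    nsmul_eq_mul]
  field_simp

lemma smooth_oneHot_self {C : ℕ} (lam : ℝ) (y : Fin C) :
    smooth lam (oneHot y) y = 1 / (1 + lam) + lam / ((1 + lam) * C) := by
  simp only [smooth, oneHot, ↓reduceIte]
  rw [add_div, div_div, mul_comm]

lemma oneHot_nonneg {C : ℕ} (y i : Fin C) : 0 ≤ oneHot y i := by
  unfold oneHot
  split_ifs <;> norm_num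

lemma sum_oneHot {C : ℕ} (y : Fin C) : ∑ i, oneHot y i = 1 := by
  simp [oneHot]

lemma le_MSP {C : ℕ} (p : Fin C → ℝ) (i : Fin C) : p i ≤ MSP p :=
  le_ciSup (Set.finite_range p).bddAbove i

theorem MSP_ge_of_KL_smooth_oneHot_le_general
    (C : ℕ) (lam : ℝ) (hlam : 0 ≤ lam) (ε : ℝ)
    (y : Fin C) (q : Fin C → ℝ) (hq : IsPosProbVec q)
    (hKL : KLdiv (smooth lam (oneHot y)) q ≤ ε) :
    MSP q ≥ 1 / (1 + lam) + lam / ((1 + lam) * (C : ℝ)) - Real.sqrt (ε / 2) := by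
  set p := smooth lam (oneHot y)
  have hp0 : ∀ i, 0 ≤ p i := smooth_nonneg hlam (oneHot_nonneg y)
  have hp1 : ∑ i, p i = 1 := sum_smooth y.pos.ne' (by positivity) (sum_oneHot y)
  have hpy : p y ≤ 1 := hp1 ▸ single_le_sum (fun i _ => hp0 i) (mem_univ y)
  have hqy : q y ≤ 1 := hq.2 ▸ single_le_sum (fun i _ => (hq.1 i).le) (mem_univ y)
  suffices p y - q y ≤ √(ε / 2) by
    rw [ge_iff_le, ← smooth_oneHot_self]
    exact (sub_le_comm.1 this).trans (le_MSP q y)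
  rcases hqy.lt_or_eq with hqy_lt | hqy_eq
  · refine Real.le_sqrt_of_sq_le ?_
    have := two_mul_sq_sub_le_binaryKL ⟨hp0 y, hpy⟩ ⟨hq.1 y, hqy_lt⟩
    linarith [binaryKL_le_KLdiv hp0 hp1 hq y]
  · linarith [Real.sqrt_nonneg (ε / 2)]

/-- If `q` is KL-close to the smoothed one-hot vector `(e_y)_λ`, then its
maximum softmax probability is large. -/
theorem MSP_ge_of_KL_smooth_oneHot_le
    (C : ℕ) (hC : 1 ≤ C) (lam : ℝ) (hlam : 0 ≤ lam) (ε : ℝ) (hε : 0 ≤ ε)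
    (y : Fin C) (q : Fin C → ℝ) (hq : IsPosProbVec q)
    (hKL : KLdiv (smooth lam (oneHot y)) q ≤ ε) :
    MSP q ≥ 1 / (1 + lam) + lam / ((1 + lam) * (C : ℝ)) - Real.sqrt (ε / 2) :=
  MSP_ge_of_KL_smooth_oneHot_le_general C lam hlam ε y q hq hKL
end
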